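/- Let q be a prime power with p = char(F_q) ∉ {2,3}, and let a be a primitive third root of unity in the algebraic closure of F_q. If A ∈ F_{q³} \ F_q satisfies N(A) = 1 and N(A+1) = −1 (where N is the norm from F_{q³} to F_q), then neither aA nor a⁻¹A satisfies both N(X) = 1 and N(X+1) = −1. -/

import Mathlib

/-!
Write `N(X) = X · X^q · X^{q²}` and let `ζ` be a primitive cube root of unity. If `q ≡ 2 (mod 3)`,
then `q² + q + 1 ≡ 1 (mod 3)`, so `N(ζA) = ζ · N(A) = ζ ≠ 1`. If `q ≡ 1 (mod 3)`, then `ζ^q = ζ`,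
so with `B = A^q`, `C = A^{q²}` the conditions `N(A) = 1`, `N(A + 1) = -1`, `N(ζA + 1) = -1` read
`ABC = 1`, `(A+1)(B+1)(C+1) = -1`, `(ζA+1)(ζB+1)(ζC+1) = -1`. These are linear in the elementary
symmetric functions of `A, B, C` and force `(X - A)(X - B)(X - C) = (X - ζ)³`; hence `A = ζ` is
fixed by the Frobenius and lies in `F_q`.
-/

theorem FiniteField.mem_range_algebraMap_of_pow_card_eq_self {K L : Type*} [Field K] [Fintype K]
    [Field L] [Finite L] [Algebra K L] {x : L} (hx : x ^ Fintype.card K = x) :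
    x ∈ Set.range (algebraMap K L) := by
  rw [IsGalois.mem_range_algebraMap_iff_fixed]
  intro f
  obtain ⟨n, rfl⟩ := (bijective_frobeniusAlgEquivOfAlgebraic_pow K L).2 f
  rw [AlgEquiv.coe_pow]
  exact Function.iterate_fixed hx n

theorem eq_of_mul_add_one_prod_eq_neg_one {R : Type*} [CommRing R] [IsDomain R] {A B C ζ : R}
    (hζ3 : ζ ^ 3 = 1) (hζ1 : ζ ≠ 1) (hABC : A * B * C = 1)
    (h1 : (A + 1) * (B + 1) * (C + 1) = -1)
    (hζ : (ζ * A + 1) * (ζ * B + 1) * (ζ * C + 1) = -1) : A = ζ := by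
  have hω : ζ ^ 2 + ζ + 1 = 0 := by
    refine mul_left_cancel₀ (sub_ne_zero.2 hζ1) ?_
    linear_combination hζ3
  set s := A * B + A * C + B * C
  have hs : ζ * s = 3 := by
    refine mul_left_cancel₀ (sub_ne_zero.2 hζ1) ?_
    linear_combination hζ - ζ * h1 + (ζ - ζ ^ 3) * hABC - hζ3
  have hcube : (A - ζ) ^ 3 = 0 := by
    linear_combination hABC - hζ3 + A * (s * hζ3 - ζ ^ 2 * hs)
      + A ^ 2 * (h1 - hABC + s * hζ3 - ζ ^ 2 * hs - 3 * hω)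
  exact sub_eq_zero.1 (pow_eq_zero_iff three_ne_zero |>.1 hcube)

section orbitNorm

variable {R : Type*} [CommRing R] (σ : R →+* R)

def orbitNorm (x : R) : R := x * σ x * σ (σ x)

theorem orbitNorm_eq_pow {q : ℕ} (hσ : ∀ x, σ x = x ^ q) (x : R) :
    orbitNorm σ x = x ^ (q ^ 2 + q + 1) := by
  simp only [orbitNorm, hσ]
  ring

theorem map_eq_self_of_orbitNorm_add_one [IsDomain R] {A ζ : R} (hσζ : σ ζ = ζ)
    (hζ3 : ζ ^ 3 = 1) (hζ1 : ζ ≠ 1) (h1 : orbitNorm σ A = 1) (h2 : orbitNorm σ (A + 1) = -1)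
    (h3 : orbitNorm σ (ζ * A + 1) = -1) : σ A = A := by
  simp only [orbitNorm, map_add, map_mul, map_one, hσζ] at h1 h2 h3
  obtain rfl := eq_of_mul_add_one_prod_eq_neg_one hζ3 hζ1 h1 h2 h3
  exact hσζ

theorem not_pow_mul_eq_one_and_pow_mul_add_one_eq_neg_one [IsDomain R] {q : ℕ}
    (hσ : ∀ x, σ x = x ^ q) (hq3 : ¬ 3 ∣ q) {ζ X : R} (hζ3 : ζ ^ 3 = 1) (hζ1 : ζ ≠ 1)
    (hX : σ X ≠ X) (h1 : X ^ (q ^ 2 + q + 1) = 1) (h2 : (X + 1) ^ (q ^ 2 + q + 1) = -1) :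
    ¬ ((ζ * X) ^ (q ^ 2 + q + 1) = 1 ∧ (ζ * X + 1) ^ (q ^ 2 + q + 1) = -1) := by
  rintro ⟨hζX, hζX1⟩
  obtain ⟨t, rfl | rfl⟩ : ∃ t, q = 3 * t + 1 ∨ q = 3 * t + 2 := ⟨q / 3, by omega⟩
  · have hσζ : σ ζ = ζ := by rw [hσ, pow_succ, pow_mul, hζ3, one_pow, one_mul]
    refine hX (map_eq_self_of_orbitNorm_add_one σ hσζ hζ3 hζ1 ?_ ?_ ?_) <;>
      rwa [orbitNorm_eq_pow σ hσ]
  · have hexp : (3 * t + 2) ^ 2 + (3 * t + 2) + 1 = 3 * (3 * t ^ 2 + 5 * t + 2) + 1 := by ring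
    rw [mul_pow, h1, mul_one, hexp, pow_succ, pow_mul, hζ3, one_pow, one_mul] at hζX
    exact hζ1 hζX

end orbitNorm

theorem stmt_14_general (p k q : ℕ) (hp : Nat.Prime p) (hq : q = p ^ k)
    (hp3 : p ≠ 3)
    (K L : Type) [Field K] [Fintype K] [Field L] [Fintype L] [Algebra K L]
    (hK : Fintype.card K = q)
    (Ω : Type) [Field Ω] [Algebra L Ω]
    (a : Ω) (ha3 : a ^ 3 = 1) (ha1 : a ≠ 1)
    (A : L) (hA : A ∉ Set.range (algebraMap K L))
    (h1 : A ^ (q ^ 2 + q + 1) = 1) (h2 : (A + 1) ^ (q ^ 2 + q + 1) = -1) :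
    ¬ ((a * algebraMap L Ω A) ^ (q ^ 2 + q + 1) = 1 ∧
        (a * algebraMap L Ω A + 1) ^ (q ^ 2 + q + 1) = -1) ∧
    ¬ ((a⁻¹ * algebraMap L Ω A) ^ (q ^ 2 + q + 1) = 1 ∧
        (a⁻¹ * algebraMap L Ω A + 1) ^ (q ^ 2 + q + 1) = -1) := by
  have : Fact p.Prime := ⟨hp⟩
  have : CharP K p := charP_of_card_eq_prime_pow (hK.trans hq)
  have : CharP L p := charP_of_injective_algebraMap' K p
  have : CharP Ω p := charP_of_injective_algebraMap' L p
  have hσ (x : Ω) : iterateFrobenius Ω p k x = x ^ q := by rw [iterateFrobenius_def, hq]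
  have hq3 : ¬ 3 ∣ q := fun h ↦ hp3 ((Nat.prime_dvd_prime_iff_eq Nat.prime_three hp).1
    (Nat.prime_three.dvd_of_dvd_pow (hq ▸ h))).symm
  have hAq : iterateFrobenius Ω p k (algebraMap L Ω A) ≠ algebraMap L Ω A := by
    rw [hσ, ← map_pow, (algebraMap L Ω).injective.ne_iff]
    exact fun h ↦ hA (FiniteField.mem_range_algebraMap_of_pow_card_eq_self (hK ▸ h))
  have hN1 : algebraMap L Ω A ^ (q ^ 2 + q + 1) = 1 := by rw [← map_pow, h1, map_one]
  have hN2 : (algebraMap L Ω A + 1) ^ (q ^ 2 + q + 1) = -1 := by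
    rw [← map_one (algebraMap L Ω), ← map_add, ← map_pow, h2, map_neg, map_one]
  exact ⟨not_pow_mul_eq_one_and_pow_mul_add_one_eq_neg_one _ hσ hq3 ha3 ha1 hAq hN1 hN2,
    not_pow_mul_eq_one_and_pow_mul_add_one_eq_neg_one _ hσ hq3 (by rw [inv_pow, ha3, inv_one])
      (inv_ne_one.2 ha1) hAq hN1 hN2⟩

/-- If `A ∈ S₄(1,−1) \ F_q` and `a` is a primitive third root of unity, then neither `aA`
nor `a⁻¹A` satisfies both `N(X) = 1` and `N(X+1) = −1`. -/
theorem stmt_14 (p k q : ℕ) (hp : Nat.Prime p) (hk : 0 < k) (hq : q = p ^ k)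
    (hp2 : p ≠ 2) (hp3 : p ≠ 3)
    (K L : Type) [Field K] [Fintype K] [Field L] [Fintype L] [Algebra K L]
    (hK : Fintype.card K = q) (hL : Fintype.card L = q ^ 3)
    (Ω : Type) [Field Ω] [IsAlgClosed Ω] [Algebra L Ω]
    (a : Ω) (ha3 : a ^ 3 = 1) (ha1 : a ≠ 1)
    (A : L) (hA : A ∉ Set.range (algebraMap K L))
    (h1 : A ^ (q ^ 2 + q + 1) = 1) (h2 : (A + 1) ^ (q ^ 2 + q + 1) = -1) :
    ¬ ((a * algebraMap L Ω A) ^ (q ^ 2 + q + 1) = 1 ∧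
        (a * algebraMap L Ω A + 1) ^ (q ^ 2 + q + 1) = -1) ∧
    ¬ ((a⁻¹ * algebraMap L Ω A) ^ (q ^ 2 + q + 1) = 1 ∧
        (a⁻¹ * algebraMap L Ω A + 1) ^ (q ^ 2 + q + 1) = -1) :=
  stmt_14_general p k q hp hq hp3 K L hK Ω a ha3 ha1 A hA h1 h2
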